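/- arXiv:2006.14183 — 3 statements merged into one kernel-verified Lean document; each statement's English description precedes it below -/
import Mathlib

section
/- Let (G,Λ) be a pseudo free self-similar k-graph such that g·v = v for all g ∈ G and v ∈ Λ^0, and let T be a maximal tail of Λ. Then the set H_T := {v ∈ T : for all p, q ∈ ℕ^k with p − q ∈ Per_{ΛT} and every μ ∈ vΛ^pT, there exists a unique ν ∈ vΛ^qT such that (μ, 1, ν) is a cycline pair of ΛT} is nonempty and hereditary in ΛT (that is, whenever v ∈ H_T and μ ∈ vΛT then s(μ) ∈ H_T). -/
/-- A `k`-graph: a countable small category equipped with a degree functor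
`d : Λ → ℕ^k` satisfying the unique factorization property.  Objects are
identified with their identity morphisms (the degree-zero paths);
`comp μ ν` is the composite `μν` (a junk value when `s μ ≠ r ν`). -/
structure KGraph (k : ℕ) where
  Path : Type
  countable : Countable Path
  r : Path → Path
  s : Path → Path
  d : Path → Fin k → ℕ
  comp : Path → Path → Path
  d_r : ∀ μ, d (r μ) = 0
  d_s : ∀ μ, d (s μ) = 0
  r_r : ∀ μ, r (r μ) = r μ
  s_r : ∀ μ, s (r μ) = r μ
  r_s : ∀ μ, r (s μ) = s μ
  s_s : ∀ μ, s (s μ) = s μ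
  eq_r_of_d_eq_zero : ∀ μ, d μ = 0 → μ = r μ
  comp_id : ∀ μ, comp μ (s μ) = μ
  id_comp : ∀ μ, comp (r μ) μ = μ
  r_comp : ∀ μ ν, s μ = r ν → r (comp μ ν) = r μ
  s_comp : ∀ μ ν, s μ = r ν → s (comp μ ν) = s ν
  d_comp : ∀ μ ν, s μ = r ν → d (comp μ ν) = d μ + d ν
  comp_assoc : ∀ μ ν ξ, s μ = r ν → s ν = r ξ →
    comp (comp μ ν) ξ = comp μ (comp ν ξ)
  factor : ∀ μ p q, d μ = p + q →
    ∃! αβ : Path × Path, s αβ.1 = r αβ.2 ∧ d αβ.1 = p ∧ d αβ.2 = q ∧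
      comp αβ.1 αβ.2 = μ

namespace KGraph

variable {k : ℕ} (Λ : KGraph k)

/-- The vertices of a `k`-graph are the degree-zero paths. -/
def IsVertex (v : Λ.Path) : Prop := Λ.d v = 0

/-- `Λ` is row-finite if `|v Λ^p| < ∞` for every vertex `v` and `p ∈ ℕ^k`. -/
def RowFinite : Prop :=
  ∀ v, Λ.IsVertex v → ∀ p : Fin k → ℕ, {μ | Λ.r μ = v ∧ Λ.d μ = p}.Finite

/-- `Λ` is source-free if `v Λ^p ≠ ∅` for every vertex `v` and `p ∈ ℕ^k`. -/
def SourceFree : Prop :=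
  ∀ v, Λ.IsVertex v → ∀ p : Fin k → ℕ, ∃ μ, Λ.r μ = v ∧ Λ.d μ = p

/-- `ΛT`, the set of paths of `Λ` whose source lies in `T`. -/
def tailPaths (T : Set Λ.Path) : Set Λ.Path := {μ | Λ.s μ ∈ T}

/-- `H Λ T`, the set of paths with source in `T` and range in `H`. -/
def cornerPaths (T H : Set Λ.Path) : Set Λ.Path := {μ | Λ.s μ ∈ T ∧ Λ.r μ ∈ H}

end KGraph

/-- A maximal tail of a `k`-graph. -/
structure MaximalTail {k : ℕ} (Λ : KGraph k) (T : Set Λ.Path) : Prop where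
  nonempty : T.Nonempty
  vertex : ∀ v ∈ T, Λ.IsVertex v
  backward_closed : ∀ w, Λ.IsVertex w → ∀ v ∈ T, (∃ μ, Λ.r μ = w ∧ Λ.s μ = v) → w ∈ T
  reaches : ∀ v ∈ T, ∀ p : Fin k → ℕ, ∃ μ, Λ.r μ = v ∧ Λ.d μ = p ∧ Λ.s μ ∈ T
  directed : ∀ v₁ ∈ T, ∀ v₂ ∈ T, ∃ w ∈ T,
    (∃ μ, Λ.r μ = v₁ ∧ Λ.s μ = w) ∧ (∃ ν, Λ.r ν = v₂ ∧ Λ.s ν = w)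

/-- An infinite path of a `k`-graph, i.e. a degree-preserving functor
`x : Ω_k → Λ`; here `val p n` records the segment `x(p, p + n)`. -/
structure InfPath {k : ℕ} (Λ : KGraph k) where
  val : (Fin k → ℕ) → (Fin k → ℕ) → Λ.Path
  d_val : ∀ p n, Λ.d (val p n) = n
  r_val : ∀ p n, Λ.r (val p n) = val p 0
  s_val : ∀ p n, Λ.s (val p n) = val (p + n) 0
  comp_val : ∀ p m n, Λ.comp (val p m) (val (p + m) n) = val p (m + n)

namespace InfPath

variable {k : ℕ} {Λ : KGraph k}

/-- The shift `σ^n x` of an infinite path. -/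
def shift (x : InfPath Λ) (n : Fin k → ℕ) : InfPath Λ where
  val p m := x.val (p + n) m
  d_val p m := x.d_val _ _
  r_val p m := x.r_val _ _
  s_val p m := by rw [x.s_val, add_right_comm]
  comp_val p m m' := by
    show Λ.comp (x.val (p + n) m) (x.val (p + m + n) m') = x.val (p + n) (m + m')
    rw [add_right_comm p m n]; exact x.comp_val (p + n) m m'

/-- An infinite path lies in the subgraph determined by the set of paths `P`
if all of its segments lie in `P`. -/
def inSub (P : Set Λ.Path) (x : InfPath Λ) : Prop := ∀ p n, x.val p n ∈ P

end InfPath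

/-- `z = μ x`: `z` is the infinite path obtained by prepending the finite
path `μ` to the infinite path `x` (which requires `s μ = x(0,0)`). -/
def KGraph.IsExtension {k : ℕ} (Λ : KGraph k) (μ : Λ.Path) (x z : InfPath Λ) : Prop :=
  Λ.s μ = x.val 0 0 ∧ ∀ n, z.val 0 (Λ.d μ + n) = Λ.comp μ (x.val 0 n)

/-- A cycline pair `(μ, 1, ν)` of the subgraph of `Λ` determined by the set of
paths `P`: `s μ = s ν` and `μ x = ν x` for every infinite path `x` of the
subgraph with range `s ν`. -/
def KGraph.IsCyclinePair {k : ℕ} (Λ : KGraph k) (P : Set Λ.Path) (μ ν : Λ.Path) : Prop :=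
  μ ∈ P ∧ ν ∈ P ∧ Λ.s μ = Λ.s ν ∧
    ∀ x : InfPath Λ, x.inSub P →
      ∀ z : InfPath Λ, Λ.IsExtension ν x z → Λ.IsExtension μ x z

/-- `Per_Γ` for the subgraph `Γ` of `Λ` determined by `P`:
the set of all `d μ − d ν` over cycline pairs `(μ, 1, ν)`. -/
def KGraph.PerPair {k : ℕ} (Λ : KGraph k) (P : Set Λ.Path) : Set (Fin k → ℤ) :=
  {m | ∃ μ ν, Λ.IsCyclinePair P μ ν ∧ m = fun i => (Λ.d μ i : ℤ) - (Λ.d ν i : ℤ)}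

/-- A self-similar `k`-graph `(G, Λ)`: an action of the countable discrete
group `G` on `Λ` together with a restriction map `(g, μ) ↦ g|_μ`. -/
structure SelfSimilarSys (k : ℕ) (G : Type) [Group G] [Countable G] (Λ : KGraph k) where
  act : G → Λ.Path → Λ.Path
  res : G → Λ.Path → G
  act_one : ∀ μ, act 1 μ = μ
  act_mul : ∀ g h μ, act (g * h) μ = act g (act h μ)
  d_act : ∀ g μ, Λ.d (act g μ) = Λ.d μ
  s_act : ∀ g μ, Λ.s (act g μ) = act g (Λ.s μ)
  r_act : ∀ g μ, Λ.r (act g μ) = act g (Λ.r μ)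
  act_comp : ∀ g μ ν, Λ.s μ = Λ.r ν →
    act g (Λ.comp μ ν) = Λ.comp (act g μ) (act (res g μ) ν)
  res_vertex : ∀ g v, Λ.IsVertex v → res g v = g
  res_comp : ∀ g μ ν, Λ.s μ = Λ.r ν → res g (Λ.comp μ ν) = res (res g μ) ν
  res_one : ∀ μ, res 1 μ = 1
  res_mul : ∀ g h μ, res (g * h) μ = res g (act h μ) * res h μ

namespace SelfSimilarSys

variable {k : ℕ} {G : Type} [Group G] [Countable G] {Λ : KGraph k}

/-- `(G, Λ)` is pseudo free: `g·μ = μ` and `g|_μ = 1` imply `g = 1`. -/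
def PseudoFree (S : SelfSimilarSys k G Λ) : Prop :=
  ∀ g μ, S.act g μ = μ → S.res g μ = 1 → g = 1

/-- `y = g · x` for infinite paths: `y(0, n) = g · x(0, n)` for all `n`. -/
def IsGAct (S : SelfSimilarSys k G Λ) (g : G) (x y : InfPath Λ) : Prop :=
  ∀ n, y.val 0 n = S.act g (x.val 0 n)

/-- A cycline triple `(μ, g, ν)` of the subgraph of `Λ` determined by `P`:
`s μ = g · s ν` and `μ (g · x) = ν x` for every infinite path `x` of the
subgraph with range `s ν`. -/
def IsCyclineTriple (S : SelfSimilarSys k G Λ) (P : Set Λ.Path)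
    (μ : Λ.Path) (g : G) (ν : Λ.Path) : Prop :=
  μ ∈ P ∧ ν ∈ P ∧ Λ.s μ = S.act g (Λ.s ν) ∧
    ∀ x : InfPath Λ, x.inSub P → Λ.s ν = x.val 0 0 →
      ∀ y : InfPath Λ, S.IsGAct g x y →
        ∀ z : InfPath Λ, Λ.IsExtension ν x z → Λ.IsExtension μ y z

/-- `Per_{G,Γ}` for the subgraph `Γ` of `Λ` determined by `P`:
the set of all `d μ − d ν` over cycline triples `(μ, g, ν)`. -/
def PerTriple (S : SelfSimilarSys k G Λ) (P : Set Λ.Path) : Set (Fin k → ℤ) :=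
  {m | ∃ μ g ν, S.IsCyclineTriple P μ g ν ∧ m = fun i => (Λ.d μ i : ℤ) - (Λ.d ν i : ℤ)}

/-- Membership `y ∈ [x]`: `y` is an infinite path of `ΛT` and
`σ^p x = g · σ^q y` for some `p, q ∈ ℕ^k` and `g ∈ G`. -/
def ClassMem (S : SelfSimilarSys k G Λ) (T : Set Λ.Path) (x y : InfPath Λ) : Prop :=
  y.inSub (Λ.tailPaths T) ∧ ∃ p q : Fin k → ℕ, ∃ g : G, S.IsGAct g (y.shift q) (x.shift p)

end SelfSimilarSys

/-- `H_T`: the vertices `v ∈ T` such that for all `p, q ∈ ℕ^k` with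
`p − q ∈ Per_{ΛT}` and every `μ ∈ v Λ^p T` there is a unique `ν ∈ v Λ^q T`
with `(μ, 1, ν)` a cycline pair of `ΛT`. -/
def KGraph.HSet {k : ℕ} (Λ : KGraph k) (T : Set Λ.Path) : Set Λ.Path :=
  {v | v ∈ T ∧ ∀ p q : Fin k → ℕ,
    (fun i => (p i : ℤ) - (q i : ℤ)) ∈ Λ.PerPair (Λ.tailPaths T) →
      ∀ μ, Λ.r μ = v → Λ.d μ = p → Λ.s μ ∈ T →
        ∃! ν, Λ.r ν = v ∧ Λ.d ν = q ∧ Λ.IsCyclinePair (Λ.tailPaths T) μ ν}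

/-!
Call `ν` a partner of `μ` if `(μ, 1, ν)` is a cycline pair of `ΛT` with `r ν = r μ`. Cycline
pairs of `ΛT` survive composition on the right with paths of `ΛT` and can be cancelled on the
left, so a cycline pair `(α, β)` with `s α = v` gives every `μ ∈ v Λ T` partners of every degree
`q ≥ 0` with `d μ - q = d α - d β`, and this property passes from `v` to every vertex below `v`.
`Per_{ΛT}` is a group, and by Dickson's lemma a finite set of nonzero periods contains, below
every nonzero period `g`, one that lies coordinatewise between `0` and `g`. As `T` is directed,
some `v ∈ T` lies below cycline pairs realising all of these; peeling them off one at a time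
gives partners at `v` for every period, so `v ∈ H_T`. Partners are unique because `μ x = ν x`
determines `ν` from its degree.
-/

/-- `posNegParts h ≤ posNegParts g` says that each `h i` lies between `0` and `g i`. -/
def posNegParts {k : ℕ} (g : Fin k → ℤ) : Fin k → ℕ × ℕ := fun i => ((g i).toNat, (-g i).toNat)

lemma posNegParts_injective {k : ℕ} : Function.Injective (posNegParts (k := k)) := by
  intro g h hgh
  funext i
  have := congrFun hgh i
  simp only [posNegParts, Prod.ext_iff] at this
  omega

lemma posNegParts_sub_lt {k : ℕ} {g h : Fin k → ℤ} (hle : posNegParts h ≤ posNegParts g)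
    (hh : h ≠ 0) : posNegParts (g - h) < posNegParts g := by
  refine lt_of_le_of_ne (fun i => ?_) fun heq => hh ?_
  · have := hle i
    simp only [posNegParts, Prod.mk_le_mk, Pi.sub_apply] at this ⊢
    omega
  · simpa using posNegParts_injective heq

/-- Dickson's lemma. -/
lemma exists_finite_posNegParts_basis {k : ℕ} (P : Set (Fin k → ℤ)) :
    ∃ S ⊆ P \ {0}, S.Finite ∧ ∀ g ∈ P \ {0}, ∃ h ∈ S, posNegParts h ≤ posNegParts g := by
  set A := posNegParts '' (P \ {0})
  refine ⟨posNegParts ⁻¹' {a | Minimal (· ∈ A) a}, ?_, ?_, ?_⟩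
  · rintro h ⟨⟨h', hh', he⟩, -⟩
    rwa [← posNegParts_injective he]
  · exact (WellQuasiOrderedLE.finite_of_isAntichain (setOfPred_minimal_antichain _)).preimage
      posNegParts_injective.injOn
  · intro g hg
    obtain ⟨b, hb, hmin⟩ := exists_minimal_le_of_wellFoundedLT (· ∈ A) _ (Set.mem_image_of_mem _ hg)
    obtain ⟨h, -, rfl⟩ := hmin.prop
    exact ⟨h, hmin, hb⟩

namespace KGraph

variable {k : ℕ} {Λ : KGraph k}

lemma comp_inj {A B A' B' : Λ.Path} (hAB : Λ.s A = Λ.r B) (hAB' : Λ.s A' = Λ.r B')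
    (hd : Λ.d A = Λ.d A') (h : Λ.comp A B = Λ.comp A' B') : A = A' ∧ B = B' := by
  have hdB : Λ.d B = Λ.d B' := by
    have := Λ.d_comp A B hAB
    rw [h, Λ.d_comp A' B' hAB', hd] at this
    exact (add_left_cancel this).symm
  obtain ⟨_, -, huniq⟩ := Λ.factor (Λ.comp A B) (Λ.d A) (Λ.d B) (Λ.d_comp A B hAB)
  exact Prod.ext_iff.1 <|
    (huniq (A, B) ⟨hAB, rfl, rfl, rfl⟩).trans
      (huniq (A', B') ⟨hAB', hd.symm, hdB.symm, h.symm⟩).symm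

lemma comp_left_cancel {A B B' : Λ.Path} (hAB : Λ.s A = Λ.r B) (hAB' : Λ.s A = Λ.r B')
    (h : Λ.comp A B = Λ.comp A B') : B = B' :=
  (comp_inj hAB hAB' rfl h).2

def IsSegment (F : Λ.Path) (a : Fin k → ℕ) (S : Λ.Path) : Prop :=
  ∃ G₁ G₂, Λ.s G₁ = Λ.r S ∧ Λ.s S = Λ.r G₂ ∧ Λ.d G₁ = a ∧ Λ.comp G₁ (Λ.comp S G₂) = F

lemma IsSegment.unique {F S S' : Λ.Path} {a : Fin k → ℕ} (h : IsSegment F a S)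
    (h' : IsSegment F a S') (hd : Λ.d S = Λ.d S') : S = S' := by
  obtain ⟨G₁, G₂, h₁, h₂, rfl, rfl⟩ := h
  obtain ⟨H₁, H₂, h₁', h₂', hH, hF⟩ := h'
  have e := comp_inj (by rwa [Λ.r_comp _ _ h₂]) (by rwa [Λ.r_comp _ _ h₂']) hH.symm hF.symm
  exact (comp_inj h₂ h₂' hd e.2).1

lemma exists_isSegment {F : Λ.Path} {a b : Fin k → ℕ} (h : a + b ≤ Λ.d F) :
    ∃ S, Λ.d S = b ∧ IsSegment F a S := by
  obtain ⟨⟨G₁, M⟩, ⟨h₁, hG₁, hM, hF⟩, -⟩ :=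
    Λ.factor F a (Λ.d F - a) (add_tsub_cancel_of_le (le_self_add.trans h)).symm
  obtain ⟨⟨S, G₂⟩, ⟨h₂, hS, -, rfl⟩, -⟩ := Λ.factor M b (Λ.d M - b)
    (add_tsub_cancel_of_le (by rw [hM]; exact le_tsub_of_add_le_left h)).symm
  exact ⟨S, hS, G₁, G₂, by rwa [Λ.r_comp _ _ h₂] at h₁, h₂, hG₁, hF⟩

lemma isSegment_zero_comp {A B : Λ.Path} (hAB : Λ.s A = Λ.r B) :
    IsSegment (Λ.comp A B) 0 A :=
  ⟨Λ.r A, B, Λ.s_r A, hAB, Λ.d_r A, by rw [← Λ.r_comp A B hAB]; exact Λ.id_comp _⟩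

lemma isSegment_self (F : Λ.Path) : IsSegment F 0 F := by
  simpa only [Λ.comp_id] using isSegment_zero_comp (Λ.r_s F).symm

lemma IsSegment.comp_right {F E S : Λ.Path} {a : Fin k → ℕ} (h : IsSegment F a S)
    (hFE : Λ.s F = Λ.r E) : IsSegment (Λ.comp F E) a S := by
  obtain ⟨G₁, G₂, h₁, h₂, hG₁, rfl⟩ := h
  have h₁' : Λ.s G₁ = Λ.r (Λ.comp S G₂) := by rwa [Λ.r_comp _ _ h₂]
  have hG₂E : Λ.s G₂ = Λ.r E := by rwa [Λ.s_comp _ _ h₁', Λ.s_comp _ _ h₂] at hFE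
  refine ⟨G₁, Λ.comp G₂ E, h₁, by rwa [Λ.r_comp _ _ hG₂E], hG₁, ?_⟩
  rw [Λ.comp_assoc _ _ _ h₁' (by rwa [Λ.s_comp _ _ h₂]), Λ.comp_assoc _ _ _ h₂ hG₂E]

lemma IsSegment.r {F S : Λ.Path} {a : Fin k → ℕ} (h : IsSegment F a S) :
    IsSegment F a (Λ.r S) := by
  obtain ⟨G₁, G₂, h₁, h₂, hG₁, rfl⟩ := h
  refine ⟨G₁, Λ.comp S G₂, by rwa [Λ.r_r], by rw [Λ.s_r, Λ.r_comp _ _ h₂], hG₁, ?_⟩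
  rw [← Λ.r_comp _ _ h₂, Λ.id_comp]

lemma IsSegment.s {F S : Λ.Path} {a : Fin k → ℕ} (h : IsSegment F a S) :
    IsSegment F (a + Λ.d S) (Λ.s S) := by
  obtain ⟨G₁, G₂, h₁, h₂, rfl, rfl⟩ := h
  refine ⟨Λ.comp G₁ S, G₂, by rw [Λ.s_comp _ _ h₁, Λ.r_s], by rw [Λ.s_s, h₂],
    Λ.d_comp _ _ h₁, ?_⟩
  rw [h₂, Λ.id_comp, Λ.comp_assoc _ _ _ h₁ h₂]

lemma IsSegment.comp {F S S' : Λ.Path} {a : Fin k → ℕ} (h : IsSegment F a S)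
    (h' : IsSegment F (a + Λ.d S) S') : Λ.s S = Λ.r S' ∧ IsSegment F a (Λ.comp S S') := by
  obtain ⟨G₁, G₂, h₁, h₂, rfl, rfl⟩ := h
  obtain ⟨H₁, H₂, h₁', h₂', hH₁, hF⟩ := h'
  obtain ⟨-, rfl⟩ := comp_inj (A := Λ.comp G₁ S) (by rwa [Λ.s_comp _ _ h₁])
    (by rwa [Λ.r_comp _ _ h₂']) (by rw [Λ.d_comp _ _ h₁, hH₁])
    (by rw [Λ.comp_assoc _ _ _ h₁ h₂, hF])
  have hSS' : Λ.s S = Λ.r S' := by rw [h₂, Λ.r_comp _ _ h₂']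
  exact ⟨hSS', G₁, H₂, by rwa [Λ.r_comp _ _ hSS'], by rwa [Λ.s_comp _ _ hSS'], rfl,
    by rw [Λ.comp_assoc _ _ _ hSS' h₂']⟩

structure Chain (Λ : KGraph k) where
  F : ℕ → Λ.Path
  step : ∀ j, ∃ E, Λ.s (F j) = Λ.r E ∧ Λ.comp (F j) E = F (j + 1)
  le_d : ∀ j, (fun _ => j) ≤ Λ.d (F j)

namespace Chain

variable (C : Chain Λ)

lemma isSegment_mono {i j : ℕ} (hij : i ≤ j) {a : Fin k → ℕ} {S : Λ.Path}
    (h : IsSegment (C.F i) a S) : IsSegment (C.F j) a S := by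
  induction hij with
  | refl => exact h
  | step _ ih =>
    obtain ⟨E, hE, hF⟩ := C.step _
    rw [← hF]
    exact ih.comp_right hE

lemma exists_segment (p n : Fin k → ℕ) : ∃ S, Λ.d S = n ∧ ∃ j, IsSegment (C.F j) p S := by
  have hle : p + n ≤ fun _ => Finset.univ.sup (p + n) := fun i => Finset.le_sup (Finset.mem_univ i)
  obtain ⟨S, hS, hseg⟩ := KGraph.exists_isSegment (hle.trans (C.le_d _))
  exact ⟨S, hS, _, hseg⟩

noncomputable def seg (p n : Fin k → ℕ) : Λ.Path := (C.exists_segment p n).choose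

lemma d_seg (p n : Fin k → ℕ) : Λ.d (C.seg p n) = n := (C.exists_segment p n).choose_spec.1

lemma isSegment_seg (p n : Fin k → ℕ) : ∃ j, IsSegment (C.F j) p (C.seg p n) :=
  (C.exists_segment p n).choose_spec.2

lemma seg_eq {j : ℕ} {p : Fin k → ℕ} {S : Λ.Path} (h : IsSegment (C.F j) p S) :
    C.seg p (Λ.d S) = S := by
  obtain ⟨i, hi⟩ := C.isSegment_seg p (Λ.d S)
  exact (C.isSegment_mono (le_max_left i j) hi).unique (C.isSegment_mono (le_max_right i j) h)
    (C.d_seg _ _)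

noncomputable def toInfPath : InfPath Λ where
  val := C.seg
  d_val := C.d_seg
  r_val p n := by
    obtain ⟨j, hj⟩ := C.isSegment_seg p n
    simpa only [Λ.d_r] using (C.seg_eq hj.r).symm
  s_val p n := by
    obtain ⟨j, hj⟩ := C.isSegment_seg p n
    simpa only [Λ.d_s, C.d_seg] using (C.seg_eq hj.s).symm
  comp_val p m n := by
    obtain ⟨i, hi⟩ := C.isSegment_seg p m
    obtain ⟨j, hj⟩ := C.isSegment_seg (p + m) n
    have hj' : IsSegment (C.F j) (p + Λ.d (C.seg p m)) (C.seg (p + m) n) := by rwa [C.d_seg]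
    obtain ⟨hcomp, hseg⟩ :=
      (C.isSegment_mono (le_max_left i j) hi).comp (C.isSegment_mono (le_max_right i j) hj')
    have := C.seg_eq hseg
    rw [Λ.d_comp _ _ hcomp, C.d_seg, C.d_seg] at this
    exact this.symm

lemma toInfPath_val_eq {j : ℕ} {p : Fin k → ℕ} {S : Λ.Path} (h : IsSegment (C.F j) p S) :
    C.toInfPath.val p (Λ.d S) = S :=
  C.seg_eq h

end Chain

end KGraph

namespace InfPath

variable {k : ℕ} {Λ : KGraph k}

lemma s_val_zero (x : InfPath Λ) (m n : Fin k → ℕ) : Λ.s (x.val 0 m) = Λ.r (x.val m n) := by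
  rw [x.s_val, x.r_val, zero_add]

lemma comp_val_zero (x : InfPath Λ) (m n : Fin k → ℕ) :
    Λ.comp (x.val 0 m) (x.val m n) = x.val 0 (m + n) := by
  simpa only [zero_add] using x.comp_val 0 m n

lemma ext_val_zero {x y : InfPath Λ} (h : ∀ n, x.val 0 n = y.val 0 n) : x = y := by
  have hval : x.val = y.val := by
    funext p n
    refine KGraph.comp_left_cancel (x.s_val_zero p n) (by rw [h p]; exact y.s_val_zero p n) ?_
    rw [x.comp_val_zero, h, h p, y.comp_val_zero]
  cases x; cases y; cases hval; rfl

lemma val_zero_eq_of_add {x y : InfPath Λ} {m n : Fin k → ℕ}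
    (h : x.val 0 (m + n) = y.val 0 (m + n)) : x.val 0 m = y.val 0 m :=
  (KGraph.comp_inj (x.s_val_zero m n) (y.s_val_zero m n) (by rw [x.d_val, y.d_val])
    (by rw [x.comp_val_zero, y.comp_val_zero, h])).1

lemma inSub_tailPaths {T : Set Λ.Path} (hT : MaximalTail Λ T) {x : InfPath Λ}
    (h : ∀ p, ∃ q, p ≤ q ∧ x.val q 0 ∈ T) : x.inSub (Λ.tailPaths T) := by
  intro p n
  obtain ⟨q, hpq, hq⟩ := h (p + n)
  show Λ.s (x.val p n) ∈ T
  rw [x.s_val]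
  refine hT.backward_closed _ (x.d_val _ 0) _ hq ⟨x.val (p + n) (q - (p + n)), x.r_val _ _, ?_⟩
  rw [x.s_val, add_tsub_cancel_of_le hpq]

end InfPath

namespace KGraph

variable {k : ℕ} {Λ : KGraph k} {T : Set Λ.Path}

namespace IsExtension

variable {μ : Λ.Path} {x y z : InfPath Λ}

lemma s_eq_r (hz : Λ.IsExtension μ x z) (n : Fin k → ℕ) : Λ.s μ = Λ.r (x.val 0 n) := by
  rw [x.r_val]; exact hz.1

lemma val_d (hz : Λ.IsExtension μ x z) : z.val 0 (Λ.d μ) = μ := by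
  simpa only [add_zero, ← hz.1, Λ.comp_id] using hz.2 0

lemma val_zero (hz : Λ.IsExtension μ x z) : z.val 0 0 = Λ.r μ := by
  rw [← z.r_val 0 (Λ.d μ), hz.val_d]

lemma unique {z' : InfPath Λ} (hz : Λ.IsExtension μ x z) (hz' : Λ.IsExtension μ x z') :
    z = z' :=
  InfPath.ext_val_zero fun n =>
    InfPath.val_zero_eq_of_add (n := Λ.d μ) (by rw [add_comm, hz.2, hz'.2])

lemma cancel (hz : Λ.IsExtension μ x z) (hy : Λ.IsExtension μ y z) : x = y :=
  InfPath.ext_val_zero fun n =>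
    comp_left_cancel (hz.s_eq_r n) (hy.s_eq_r n) (by rw [← hz.2, ← hy.2])

lemma comp {A B : Λ.Path} (hA : Λ.IsExtension A y z) (hAB : Λ.s A = Λ.r B)
    (hB : Λ.IsExtension B x y) : Λ.IsExtension (Λ.comp A B) x z :=
  ⟨by rw [Λ.s_comp _ _ hAB]; exact hB.1, fun n => by
    rw [Λ.d_comp _ _ hAB, add_assoc, hA.2, hB.2, Λ.comp_assoc _ _ _ hAB (hB.s_eq_r n)]⟩

lemma inSub (hT : MaximalTail Λ T) (hz : Λ.IsExtension μ x z)
    (hx : x.inSub (Λ.tailPaths T)) : z.inSub (Λ.tailPaths T) := by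
  refine InfPath.inSub_tailPaths hT fun p => ⟨Λ.d μ + p, le_add_self, ?_⟩
  have := z.s_val 0 (Λ.d μ + p)
  rw [zero_add] at this
  rw [← this, hz.2, Λ.s_comp _ _ (hz.s_eq_r p)]
  exact hx 0 p

end IsExtension

lemma exists_isExtension {μ : Λ.Path} {x : InfPath Λ} (h : Λ.s μ = x.val 0 0) :
    ∃ z, Λ.IsExtension μ x z := by
  have hr : ∀ n, Λ.s μ = Λ.r (x.val 0 n) := fun n => by rw [x.r_val]; exact h
  let C : Chain Λ :=
    { F := fun j => Λ.comp μ (x.val 0 fun _ => j)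
      step := fun j => ⟨x.val (fun _ => j) (fun _ => 1),
        by rw [Λ.s_comp _ _ (hr _)]; exact x.s_val_zero _ _,
        by rw [Λ.comp_assoc _ _ _ (hr _) (x.s_val_zero _ _), x.comp_val_zero]; rfl⟩
      le_d := fun j => by rw [Λ.d_comp _ _ (hr _), x.d_val]; exact le_add_self }
  refine ⟨C.toInfPath, h, fun n => ?_⟩
  obtain ⟨j, hj⟩ : ∃ j : ℕ, n ≤ fun _ => j :=
    ⟨Finset.univ.sup n, fun i => Finset.le_sup (Finset.mem_univ i)⟩
  have hseg : IsSegment (C.F j) 0 (Λ.comp μ (x.val 0 n)) := by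
    have hF : C.F j = Λ.comp (Λ.comp μ (x.val 0 n)) (x.val n ((fun _ => j) - n)) := by
      rw [Λ.comp_assoc _ _ _ (hr n) (x.s_val_zero _ _), x.comp_val_zero,
        add_tsub_cancel_of_le hj]
    rw [hF]
    exact isSegment_zero_comp (by rw [Λ.s_comp _ _ (hr n)]; exact x.s_val_zero _ _)
  simpa only [Λ.d_comp _ _ (hr n), x.d_val] using C.toInfPath_val_eq hseg

noncomputable def tailSeq (hT : MaximalTail Λ T) {v : Λ.Path} (hv : v ∈ T) :
    (j : ℕ) → {F : Λ.Path // Λ.s F ∈ T ∧ Λ.d F = fun _ => j}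
  | 0 => ⟨v, by
      have hvr := Λ.eq_r_of_d_eq_zero v (hT.vertex v hv)
      rwa [hvr, Λ.s_r, ← hvr], hT.vertex v hv⟩
  | j + 1 =>
    let F := tailSeq hT hv j
    let E := hT.reaches _ F.2.1 fun _ => 1
    ⟨Λ.comp F.1 E.choose, by rw [Λ.s_comp _ _ E.choose_spec.1.symm]; exact E.choose_spec.2.2,
      by rw [Λ.d_comp _ _ E.choose_spec.1.symm, F.2.2, E.choose_spec.2.1]; rfl⟩

lemma exists_infPath_tail (hT : MaximalTail Λ T) {v : Λ.Path} (hv : v ∈ T) :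
    ∃ x : InfPath Λ, x.inSub (Λ.tailPaths T) ∧ x.val 0 0 = v := by
  let C : Chain Λ :=
    { F := fun j => (tailSeq hT hv j).1
      step := fun j => ⟨_, (hT.reaches _ (tailSeq hT hv j).2.1 fun _ => 1).choose_spec.1.symm, rfl⟩
      le_d := fun j => (tailSeq hT hv j).2.2.ge }
  have hval : ∀ j, C.toInfPath.val 0 (Λ.d (C.F j)) = C.F j := fun j =>
    C.toInfPath_val_eq (isSegment_self _)
  refine ⟨C.toInfPath,
    InfPath.inSub_tailPaths hT fun p => ⟨Λ.d (C.F (Finset.univ.sup p)), ?_, ?_⟩, ?_⟩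
  · exact le_trans (fun i => Finset.le_sup (Finset.mem_univ i)) (C.le_d _)
  · rw [← zero_add (Λ.d _), ← C.toInfPath.s_val, hval]
    exact (tailSeq hT hv _).2.1
  · have h0 : Λ.d (C.F 0) = 0 := (tailSeq hT hv 0).2.2
    have h := hval 0
    rwa [h0] at h

lemma IsExtension.of_comp {A B : Λ.Path} {x z : InfPath Λ} (hAB : Λ.s A = Λ.r B)
    (h : Λ.IsExtension (Λ.comp A B) x z) : ∃ y, Λ.IsExtension B x y ∧ Λ.IsExtension A y z := by
  obtain ⟨y, hy⟩ := exists_isExtension ((Λ.s_comp _ _ hAB).symm.trans h.1)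
  obtain ⟨w, hw⟩ := exists_isExtension (hAB.trans hy.val_zero.symm)
  exact ⟨y, hy, (hw.comp hAB hy).unique h ▸ hw⟩

namespace IsCyclinePair

variable {μ ν : Λ.Path}

lemma refl {P : Set Λ.Path} (hμ : μ ∈ P) : Λ.IsCyclinePair P μ μ :=
  ⟨hμ, hμ, rfl, fun _ _ _ h => h⟩

lemma trans {P : Set Λ.Path} {ξ : Λ.Path} (h : Λ.IsCyclinePair P μ ν)
    (h' : Λ.IsCyclinePair P ν ξ) : Λ.IsCyclinePair P μ ξ :=
  ⟨h.1, h'.2.1, h.2.2.1.trans h'.2.2.1, fun x hx z hz => h.2.2.2 x hx z (h'.2.2.2 x hx z hz)⟩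

lemma symm {P : Set Λ.Path} (h : Λ.IsCyclinePair P μ ν) : Λ.IsCyclinePair P ν μ := by
  obtain ⟨hμ, hν, hs, hext⟩ := h
  refine ⟨hν, hμ, hs.symm, fun x hx z hz => ?_⟩
  obtain ⟨y, hy⟩ := exists_isExtension (hs.symm.trans hz.1)
  rwa [← (hext x hx y hy).unique hz]

lemma comp_right (hT : MaximalTail Λ T) {ρ : Λ.Path} (h : Λ.IsCyclinePair (Λ.tailPaths T) μ ν)
    (hμρ : Λ.s μ = Λ.r ρ) (hρ : Λ.s ρ ∈ T) :
    Λ.IsCyclinePair (Λ.tailPaths T) (Λ.comp μ ρ) (Λ.comp ν ρ) := by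
  obtain ⟨-, -, hs, hext⟩ := h
  have hνρ : Λ.s ν = Λ.r ρ := hs ▸ hμρ
  refine ⟨show Λ.s _ ∈ T by rwa [Λ.s_comp _ _ hμρ], show Λ.s _ ∈ T by rwa [Λ.s_comp _ _ hνρ],
    by rw [Λ.s_comp _ _ hμρ, Λ.s_comp _ _ hνρ], fun x hx z hz => ?_⟩
  obtain ⟨y, hy, hz⟩ := hz.of_comp hνρ
  exact (hext y (hy.inSub hT hx) z hz).comp hμρ hy

lemma exists_of_comp_left (hT : MaximalTail Λ T) {ρ η : Λ.Path}
    (h : Λ.IsCyclinePair (Λ.tailPaths T) (Λ.comp ρ μ) η) (hρμ : Λ.s ρ = Λ.r μ)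
    (hd : Λ.d ρ ≤ Λ.d η) :
    ∃ ν, Λ.s ρ = Λ.r ν ∧ Λ.comp ρ ν = η ∧ Λ.IsCyclinePair (Λ.tailPaths T) μ ν := by
  obtain ⟨hμT, hηT, hs, hext⟩ := h
  obtain ⟨⟨ρ', ν⟩, ⟨hρ'ν, hdρ', -, rfl⟩, -⟩ :=
    Λ.factor η (Λ.d ρ) (Λ.d η - Λ.d ρ) (add_tsub_cancel_of_le hd).symm
  dsimp only at hρ'ν hdρ' hηT hs hext ⊢
  obtain ⟨x, hx, hx0⟩ := exists_infPath_tail hT hηT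
  obtain ⟨z, hz⟩ := exists_isExtension (hx0.symm : Λ.s (Λ.comp ρ' ν) = _)
  obtain ⟨_, -, hz₁⟩ := hz.of_comp hρ'ν
  obtain ⟨_, -, hz₂⟩ := (hext x hx z hz).of_comp hρμ
  -- both are the initial segment of degree `d ρ` of `η x = ρ μ x`
  obtain rfl : ρ = ρ' := by rw [← hz₁.val_d, ← hz₂.val_d, hdρ']
  rw [Λ.s_comp _ _ hρμ, Λ.s_comp _ _ hρ'ν] at hs
  refine ⟨ν, hρ'ν, rfl, show Λ.s μ ∈ T from hs ▸ Λ.s_comp _ _ hρ'ν ▸ hηT,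
    show Λ.s ν ∈ T from Λ.s_comp _ _ hρ'ν ▸ hηT, hs, fun x hx y hy => ?_⟩
  obtain ⟨w, hw⟩ := exists_isExtension (hρ'ν.trans hy.val_zero.symm)
  obtain ⟨y', hy', hw'⟩ := (hext x hx w (hw.comp hρ'ν hy)).of_comp hρμ
  rwa [← hw'.cancel hw]

lemma eq_of_d_eq (hT : MaximalTail Λ T) (h : Λ.IsCyclinePair (Λ.tailPaths T) μ ν)
    (hd : Λ.d μ = Λ.d ν) : μ = ν := by
  obtain ⟨-, hν, -, hext⟩ := h
  obtain ⟨x, hx, hx0⟩ := exists_infPath_tail hT hν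
  obtain ⟨z, hz⟩ := exists_isExtension hx0.symm
  rw [← (hext x hx z hz).val_d, hd, hz.val_d]

end IsCyclinePair

def HasPartners (T : Set Λ.Path) (v : Λ.Path) (g : Fin k → ℤ) : Prop :=
  ∀ μ, Λ.r μ = v → Λ.s μ ∈ T → ∀ q : Fin k → ℕ, (fun i => (Λ.d μ i : ℤ) - q i) = g →
    ∃ ν, Λ.r ν = v ∧ Λ.d ν = q ∧ Λ.IsCyclinePair (Λ.tailPaths T) μ ν

lemma hasPartners_zero (v : Λ.Path) : HasPartners T v 0 := by
  intro μ hr hs q hq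
  refine ⟨μ, hr, funext fun i => ?_, .refl hs⟩
  simpa [sub_eq_zero] using congrFun hq i

lemma IsCyclinePair.hasPartners (hT : MaximalTail Λ T) {α β : Λ.Path}
    (h : Λ.IsCyclinePair (Λ.tailPaths T) α β) :
    HasPartners T (Λ.s α) (fun i => (Λ.d α i : ℤ) - Λ.d β i) := by
  intro μ hr hs q hq
  have hαμ : Λ.s α = Λ.r μ := hr.symm
  have hβμ : Λ.s β = Λ.r μ := h.2.2.1 ▸ hαμ
  have hdeg : Λ.d α + q = Λ.d β + Λ.d μ := funext fun i => by
    have := congrFun hq i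
    simp only [Pi.add_apply] at this ⊢
    omega
  obtain ⟨ν, hαν, hcomp, hμν⟩ := (h.comp_right hT hαμ hs).exists_of_comp_left hT hαμ
    (by rw [Λ.d_comp _ _ hβμ, ← hdeg]; exact le_self_add)
  refine ⟨ν, hαν.symm, add_left_cancel (a := Λ.d α) ?_, hμν⟩
  rw [← Λ.d_comp _ _ hαν, hcomp, Λ.d_comp _ _ hβμ, hdeg]

lemma HasPartners.at_source (hT : MaximalTail Λ T) {μ₀ : Λ.Path} {g : Fin k → ℤ}
    (h : HasPartners T (Λ.r μ₀) g) : HasPartners T (Λ.s μ₀) g := by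
  intro μ hr hs q hq
  have hμ₀μ : Λ.s μ₀ = Λ.r μ := hr.symm
  obtain ⟨η, -, hηd, hη⟩ := h (Λ.comp μ₀ μ) (Λ.r_comp _ _ hμ₀μ) (by rwa [Λ.s_comp _ _ hμ₀μ])
    (Λ.d μ₀ + q) (by rw [Λ.d_comp _ _ hμ₀μ, ← hq]; funext i; simp)
  obtain ⟨ν, hμ₀ν, rfl, hμν⟩ := hη.exists_of_comp_left hT hμ₀μ (hηd ▸ le_self_add)
  rw [Λ.d_comp _ _ hμ₀ν] at hηd
  exact ⟨ν, hμ₀ν.symm, add_left_cancel hηd, hμν⟩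

/-- The hypothesis keeps the intermediate degree `d μ - g` in `ℕ^k`. -/
lemma HasPartners.add {v : Λ.Path} {g g' : Fin k → ℤ} (h : HasPartners T v g)
    (h' : HasPartners T v g') (hle : posNegParts g ≤ posNegParts (g + g')) :
    HasPartners T v (g + g') := by
  intro μ hr hs q hq
  have hcoord : ∀ i, (Λ.d μ i : ℤ) - q i = g i + g' i ∧
      (g i).toNat ≤ (g i + g' i).toNat ∧ (-g i).toNat ≤ (-(g i + g' i)).toNat := fun i =>
    ⟨congrFun hq i, hle i⟩
  obtain ⟨ν₁, hν₁r, hν₁d, hμν₁⟩ := h μ hr hs (fun i => ((Λ.d μ i : ℤ) - g i).toNat)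
    (funext fun i => by have := hcoord i; omega)
  obtain ⟨ν, hνr, hνd, hν₁ν⟩ := h' ν₁ hν₁r hμν₁.2.1 q
    (funext fun i => by have := hcoord i; simp only [hν₁d]; omega)
  exact ⟨ν, hνr, hνd, hμν₁.trans hν₁ν⟩

lemma exists_hasPartners_of_finite (hT : MaximalTail Λ T) {S : Set (Fin k → ℤ)}
    (hS : S.Finite) (hSP : S ⊆ Λ.PerPair (Λ.tailPaths T)) :
    ∃ v ∈ T, ∀ g ∈ S, HasPartners T v g := by
  induction S, hS using Set.Finite.induction_on with
  | empty =>
    obtain ⟨v, hv⟩ := hT.nonempty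
    exact ⟨v, hv, by simp⟩
  | @insert g S _ _ ih =>
    obtain ⟨v, hv, hvS⟩ := ih ((Set.subset_insert g S).trans hSP)
    obtain ⟨α, β, hαβ, rfl⟩ := hSP (Set.mem_insert _ _)
    obtain ⟨w, hw, ⟨ρ₁, hρ₁r, rfl⟩, ⟨ρ₂, hρ₂r, hρ₂s⟩⟩ := hT.directed _ hαβ.1 v hv
    refine ⟨_, hw, ?_⟩
    rintro g (rfl | hg)
    · exact HasPartners.at_source hT (hρ₁r ▸ hαβ.hasPartners hT)
    · exact hρ₂s ▸ HasPartners.at_source hT (hρ₂r ▸ hvS g hg)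

lemma perPair_neg {g : Fin k → ℤ} (hg : g ∈ Λ.PerPair (Λ.tailPaths T)) :
    -g ∈ Λ.PerPair (Λ.tailPaths T) := by
  obtain ⟨α, β, h, rfl⟩ := hg
  exact ⟨β, α, h.symm, funext fun i => neg_sub _ _⟩

lemma perPair_add (hT : MaximalTail Λ T) {g g' : Fin k → ℤ}
    (hg : g ∈ Λ.PerPair (Λ.tailPaths T)) (hg' : g' ∈ Λ.PerPair (Λ.tailPaths T)) :
    g + g' ∈ Λ.PerPair (Λ.tailPaths T) := by
  obtain ⟨w, hw, hwg⟩ := exists_hasPartners_of_finite hT (Set.toFinite {g, g'})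
    (Set.insert_subset_iff.2 ⟨hg, Set.singleton_subset_iff.2 hg'⟩)
  obtain ⟨α, β, -, rfl⟩ := hg
  obtain ⟨α', β', -, rfl⟩ := hg'
  obtain ⟨μ, hμr, hμd, hμs⟩ := hT.reaches w hw (Λ.d α + Λ.d α')
  obtain ⟨ν₁, hν₁r, hν₁d, hμν₁⟩ := hwg _ (Set.mem_insert _ _) μ hμr hμs (Λ.d β + Λ.d α')
    (funext fun i => by simp only [hμd, Pi.add_apply]; push_cast; ring)
  obtain ⟨ν₂, -, hν₂d, hν₁ν₂⟩ := hwg _ (Set.mem_insert_of_mem _ rfl) ν₁ hν₁r hμν₁.2.1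
    (Λ.d β + Λ.d β')
    (funext fun i => by simp only [hν₁d, Pi.add_apply]; push_cast; ring)
  exact ⟨μ, ν₂, hμν₁.trans hν₁ν₂, funext fun i => by
    simp only [hμd, hν₂d, Pi.add_apply]; push_cast; ring⟩

lemma perPair_sub (hT : MaximalTail Λ T) {g h : Fin k → ℤ}
    (hg : g ∈ Λ.PerPair (Λ.tailPaths T)) (hh : h ∈ Λ.PerPair (Λ.tailPaths T)) :
    g - h ∈ Λ.PerPair (Λ.tailPaths T) :=
  sub_eq_add_neg g h ▸ perPair_add hT hg (perPair_neg hh)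

lemma hasPartners_of_basis (hT : MaximalTail Λ T) {S : Set (Fin k → ℤ)} {v : Λ.Path}
    (hS : S ⊆ Λ.PerPair (Λ.tailPaths T) \ {0})
    (hbasis : ∀ g ∈ Λ.PerPair (Λ.tailPaths T) \ {0}, ∃ h ∈ S, posNegParts h ≤ posNegParts g)
    (hv : ∀ h ∈ S, HasPartners T v h) :
    ∀ g ∈ Λ.PerPair (Λ.tailPaths T), HasPartners T v g := by
  intro g
  induction g using (InvImage.wf posNegParts wellFounded_lt).induction with
  | h g ih =>
    intro hg
    rcases eq_or_ne g 0 with rfl | hg0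
    · exact hasPartners_zero v
    obtain ⟨h, hhS, hle⟩ := hbasis g ⟨hg, hg0⟩
    have hsub := (hv h hhS).add (ih (g - h) (posNegParts_sub_lt hle (hS hhS).2)
      (perPair_sub hT hg (hS hhS).1)) (by rwa [add_sub_cancel])
    rwa [add_sub_cancel] at hsub

lemma mem_HSet_iff (hT : MaximalTail Λ T) {v : Λ.Path} :
    v ∈ Λ.HSet T ↔ v ∈ T ∧ ∀ g ∈ Λ.PerPair (Λ.tailPaths T), HasPartners T v g := by
  refine ⟨fun ⟨hv, H⟩ => ⟨hv, fun g hg μ hr hs q hq => ?_⟩,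
    fun ⟨hv, H⟩ => ⟨hv, fun p q hpq μ hr hd hs => ?_⟩⟩
  · subst hq
    exact (H _ q hg μ hr rfl hs).exists
  · subst hd
    obtain ⟨ν, hνr, hνd, hμν⟩ := H _ hpq μ hr hs q rfl
    exact ⟨ν, ⟨hνr, hνd, hμν⟩, fun ν' ⟨_, hν'd, hμν'⟩ =>
      (hμν'.symm.trans hμν).eq_of_d_eq hT (hν'd.trans hνd.symm)⟩

end KGraph

theorem HSet_nonempty_hereditary_general
    {k : ℕ} (Λ : KGraph k)
    (T : Set Λ.Path) (hT : MaximalTail Λ T) :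
    (Λ.HSet T).Nonempty ∧
    (∀ v ∈ Λ.HSet T, ∀ μ, Λ.r μ = v → Λ.s μ ∈ T → Λ.s μ ∈ Λ.HSet T) := by
  obtain ⟨S, hSP, hSfin, hbasis⟩ := exists_finite_posNegParts_basis (Λ.PerPair (Λ.tailPaths T))
  obtain ⟨v, hv, hvS⟩ := KGraph.exists_hasPartners_of_finite hT hSfin fun g hg => (hSP hg).1
  refine ⟨⟨v, (KGraph.mem_HSet_iff hT).2 ⟨hv, KGraph.hasPartners_of_basis hT hSP hbasis hvS⟩⟩, ?_⟩
  rintro v hv μ rfl hμ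
  obtain ⟨-, hpart⟩ := (KGraph.mem_HSet_iff hT).1 hv
  exact (KGraph.mem_HSet_iff hT).2 ⟨hμ, fun g hg => (hpart g hg).at_source hT⟩

/-- For a pseudo free self-similar `k`-graph `(G, Λ)` with `g · v = v` for
all vertices `v`, and a maximal tail `T` of `Λ`: the set `H_T` is nonempty
and hereditary in `ΛT`. -/
theorem HSet_nonempty_hereditary
    {k : ℕ} (G : Type) [Group G] [Countable G] (Λ : KGraph k)
    (hRF : Λ.RowFinite) (hSF : Λ.SourceFree)
    (S : SelfSimilarSys k G Λ) (hPF : S.PseudoFree)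
    (hfix : ∀ g v, Λ.IsVertex v → S.act g v = v)
    (T : Set Λ.Path) (hT : MaximalTail Λ T) :
    (Λ.HSet T).Nonempty ∧
    (∀ v ∈ Λ.HSet T, ∀ μ, Λ.r μ = v → Λ.s μ ∈ T → Λ.s μ ∈ Λ.HSet T) :=
  HSet_nonempty_hereditary_general Λ T hT
end

section
/- Let Λ be a row-finite source-free k-graph, let T₀ and T be maximal tails of Λ, and let H be a nonempty subset of T₀ that is hereditary in ΛT₀ (i.e., v ∈ H and μ ∈ vΛT₀ imply s(μ) ∈ H) and such that HΛT₀ is strongly connected (i.e., for all u, w ∈ H, uΛw ∩ ΛT₀ ≠ ∅). If H ∩ T ≠ ∅, then T₀ ⊂ T. -/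
/-! Every vertex `v ∈ T₀` reaches `H`: directedness of `T₀` gives a common descendant of `v`
and a vertex of `H` inside `T₀`, which lies in `H` by heredity. Strong connectivity and
backward closure of `T` put all of `H` into `T`, and then backward closure carries `v` into `T`. -/

namespace MaximalTail

variable {k : ℕ} {Λ : KGraph k} {T : Set Λ.Path}

theorem subset_of_stronglyConnected_of_meets (hT : MaximalTail Λ T) {H : Set Λ.Path}
    (hvert : ∀ w ∈ H, Λ.IsVertex w) (hsc : ∀ u ∈ H, ∀ w ∈ H, ∃ μ, Λ.r μ = u ∧ Λ.s μ = w)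
    (hmeet : (H ∩ T).Nonempty) : H ⊆ T := by
  obtain ⟨u, huH, huT⟩ := hmeet
  exact fun w hw => hT.backward_closed w (hvert w hw) u huT (hsc w hw u huH)

theorem exists_path_to_hereditary (hT : MaximalTail Λ T) {H : Set Λ.Path} (hHsub : H ⊆ T)
    (hher : ∀ v ∈ H, ∀ μ, Λ.r μ = v → Λ.s μ ∈ T → Λ.s μ ∈ H) (hHne : H.Nonempty)
    {v : Λ.Path} (hv : v ∈ T) : ∃ w ∈ H, ∃ μ, Λ.r μ = v ∧ Λ.s μ = w := by
  obtain ⟨u, huH⟩ := hHne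
  obtain ⟨w, hwT, hvw, ν, rfl, rfl⟩ := hT.directed v hv u (hHsub huH)
  exact ⟨Λ.s ν, hher _ huH ν rfl hwT, hvw⟩

end MaximalTail

theorem tail_subset_of_hereditary_meets_general
    {k : ℕ} (Λ : KGraph k)
    (T₀ T : Set Λ.Path) (hT₀ : MaximalTail Λ T₀) (hT : MaximalTail Λ T)
    (H : Set Λ.Path) (hHsub : H ⊆ T₀)
    (hher : ∀ v ∈ H, ∀ μ, Λ.r μ = v → Λ.s μ ∈ T₀ → Λ.s μ ∈ H)
    (hsc : ∀ u ∈ H, ∀ w ∈ H, ∃ μ, Λ.r μ = u ∧ Λ.s μ = w)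
    (hmeet : (H ∩ T).Nonempty) :
    T₀ ⊆ T := by
  have hHT : H ⊆ T :=
    hT.subset_of_stronglyConnected_of_meets (fun w hw => hT₀.vertex w (hHsub hw)) hsc hmeet
  intro v hv
  obtain ⟨w, hwH, hvw⟩ :=
    hT₀.exists_path_to_hereditary hHsub hher (hmeet.mono Set.inter_subset_left) hv
  exact hT.backward_closed v (hT₀.vertex v hv) w (hHT hwH) hvw

/-- Let `T₀, T` be maximal tails of a row-finite source-free `k`-graph `Λ`
and let `H ⊆ T₀` be nonempty, hereditary in `ΛT₀`, with `H ΛT₀` strongly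
connected.  If `H ∩ T ≠ ∅` then `T₀ ⊆ T`. -/
theorem tail_subset_of_hereditary_meets
    {k : ℕ} (Λ : KGraph k) (hRF : Λ.RowFinite) (hSF : Λ.SourceFree)
    (T₀ T : Set Λ.Path) (hT₀ : MaximalTail Λ T₀) (hT : MaximalTail Λ T)
    (H : Set Λ.Path) (hHsub : H ⊆ T₀) (hHne : H.Nonempty)
    (hher : ∀ v ∈ H, ∀ μ, Λ.r μ = v → Λ.s μ ∈ T₀ → Λ.s μ ∈ H)
    (hsc : ∀ u ∈ H, ∀ w ∈ H, ∃ μ, Λ.r μ = u ∧ Λ.s μ = w)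
    (hmeet : (H ∩ T).Nonempty) :
    T₀ ⊆ T :=
  tail_subset_of_hereditary_meets_general Λ T₀ T hT₀ hT H hHsub hher hsc hmeet
end

section
/- Let Λ be a row-finite source-free k-graph, let T₀ and T be maximal tails of Λ with T₀ ⊂ T and T₀ ≠ T, and let H be a nonempty subset of T that is hereditary in ΛT and such that HΛT is strongly connected (i.e., for all u, w ∈ H, uΛw ∩ ΛT ≠ ∅). Then H ∩ T₀ = ∅. -/
theorem MaximalTail.subset_of_mem_of_reaches_back {k : ℕ} {Λ : KGraph k} {T T₀ : Set Λ.Path}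
    (hT : MaximalTail Λ T)
    (hT₀ : ∀ w, Λ.IsVertex w → ∀ v ∈ T₀, (∃ μ, Λ.r μ = w ∧ Λ.s μ = v) → w ∈ T₀)
    {x : Λ.Path} (hxT₀ : x ∈ T₀) (hxT : x ∈ T)
    (hback : ∀ w ∈ T, (∃ ν, Λ.r ν = x ∧ Λ.s ν = w) → ∃ ξ, Λ.r ξ = w ∧ Λ.s ξ = x) :
    T ⊆ T₀ := by
  intro u huT
  obtain ⟨w, hwT, huw, hxw⟩ := hT.directed u huT x hxT
  have hwT₀ : w ∈ T₀ := hT₀ w (hT.vertex w hwT) x hxT₀ (hback w hwT hxw)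
  exact hT₀ u (hT.vertex u huT) w hwT₀ huw

theorem hereditary_disjoint_of_proper_tail_general
    {k : ℕ} (Λ : KGraph k)
    (T₀ T : Set Λ.Path) (hT₀ : MaximalTail Λ T₀) (hT : MaximalTail Λ T)
    (hsub : T₀ ⊆ T) (hne : T₀ ≠ T)
    (H : Set Λ.Path)
    (hher : ∀ v ∈ H, ∀ μ, Λ.r μ = v → Λ.s μ ∈ T → Λ.s μ ∈ H)
    (hsc : ∀ u ∈ H, ∀ w ∈ H, ∃ μ, Λ.r μ = u ∧ Λ.s μ = w) :
    H ∩ T₀ = ∅ := by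
  refine Set.eq_empty_of_forall_notMem fun x ⟨hxH, hxT₀⟩ => hne ?_
  have hback : ∀ w ∈ T, (∃ ν, Λ.r ν = x ∧ Λ.s ν = w) → ∃ ξ, Λ.r ξ = w ∧ Λ.s ξ = x := by
    rintro w hwT ⟨ν, rfl, rfl⟩
    exact hsc _ (hher _ hxH ν rfl hwT) _ hxH
  exact hsub.antisymm
    (hT.subset_of_mem_of_reaches_back hT₀.backward_closed hxT₀ (hsub hxT₀) hback)

/-- Let `T₀ ⊊ T` be maximal tails of a row-finite source-free `k`-graph `Λ`
and let `H ⊆ T` be nonempty, hereditary in `ΛT`, with `H ΛT` strongly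
connected.  Then `H ∩ T₀ = ∅`. -/
theorem hereditary_disjoint_of_proper_tail
    {k : ℕ} (Λ : KGraph k) (hRF : Λ.RowFinite) (hSF : Λ.SourceFree)
    (T₀ T : Set Λ.Path) (hT₀ : MaximalTail Λ T₀) (hT : MaximalTail Λ T)
    (hsub : T₀ ⊆ T) (hne : T₀ ≠ T)
    (H : Set Λ.Path) (hHsub : H ⊆ T) (hHne : H.Nonempty)
    (hher : ∀ v ∈ H, ∀ μ, Λ.r μ = v → Λ.s μ ∈ T → Λ.s μ ∈ H)
    (hsc : ∀ u ∈ H, ∀ w ∈ H, ∃ μ, Λ.r μ = u ∧ Λ.s μ = w) :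
    H ∩ T₀ = ∅ :=
  hereditary_disjoint_of_proper_tail_general Λ T₀ T hT₀ hT hsub hne H hher hsc
end
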